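/- Let m ≥ 2 be an integer, let u : ℝ^m ∖ {0} → ℝ^{m²} be the Misawa–Nakauchi map, let α ∈ ℝ, s ∈ ℝ, and let V : (0,∞) → ℝ be a smooth function. Define the variation ũ_s(x) = (sin(α + sV(r(x))) · u(x), cos(α + sV(r(x)))). Then for every x ∈ ℝ^m ∖ {0}, |Δũ_s(x)|² − |∇ũ_s(x)|⁴ = ( s·Δ(V∘r)(x) − sin(2α + 2sV(r(x))) · m/r(x)² )², where Δ(V∘r)(x) = V''(r(x)) + (m−1)V'(r(x))/r(x). -/

import Mathlib

noncomputable section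

open Real

/-- Partial derivative of `f` in the `k`-th coordinate direction. -/
def pd {m : ℕ} (k : Fin m) (f : EuclideanSpace ℝ (Fin m) → ℝ)
    (x : EuclideanSpace ℝ (Fin m)) : ℝ :=
  fderiv ℝ f x (EuclideanSpace.single k 1)

/-- Euclidean Laplacian `Δf = Σ_k ∂²f/∂x_k²`. -/
def lap {m : ℕ} (f : EuclideanSpace ℝ (Fin m) → ℝ)
    (x : EuclideanSpace ℝ (Fin m)) : ℝ :=
  ∑ k : Fin m, pd k (pd k f) x

/-- Squared norm of the total derivative: `|∇w|² = Σ_{k,a} (∂_k w_a)²`. -/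
def gradSq {m : ℕ} {ι : Type*} [Fintype ι]
    (w : ι → EuclideanSpace ℝ (Fin m) → ℝ) (x : EuclideanSpace ℝ (Fin m)) : ℝ :=
  ∑ k : Fin m, ∑ a : ι, (pd k (w a) x) ^ 2

/-- The Misawa–Nakauchi map `u_{ij}(x) = (1/√(m(m−1)))(−δ_{ij} + m xᵢxⱼ/r²)`. -/
def uMN (m : ℕ) (i j : Fin m) (x : EuclideanSpace ℝ (Fin m)) : ℝ :=
  (1 / Real.sqrt ((m : ℝ) * ((m : ℝ) - 1))) *
    (-(if i = j then (1 : ℝ) else 0) + (m : ℝ) * x i * x j / ‖x‖ ^ 2)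

/-- The variation `ũ_s = (sin(α + sV(r)) · u, cos(α + sV(r)))`. -/
def uTildeVar (m : ℕ) (α s : ℝ) (V : ℝ → ℝ) :
    (Fin m × Fin m) ⊕ Unit → EuclideanSpace ℝ (Fin m) → ℝ
  | Sum.inl p => fun x => Real.sin (α + s * V ‖x‖) * uMN m p.1 p.2 x
  | Sum.inr _ => fun x => Real.cos (α + s * V ‖x‖)

abbrev E (m : ℕ) := EuclideanSpace ℝ (Fin m)
variable {m : ℕ}





-- coordinate
lemma hasFDerivAt_coord (i : Fin m) (y : E m) :
    HasFDerivAt (fun z : E m => z i) (EuclideanSpace.proj (𝕜 := ℝ) i) y :=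
  (EuclideanSpace.proj (𝕜 := ℝ) i).hasFDerivAt

lemma diff_coord (i : Fin m) (y : E m) : DifferentiableAt ℝ (fun z : E m => z i) y :=
  (hasFDerivAt_coord i y).differentiableAt

lemma pd_coord (k i : Fin m) (y : E m) :
    pd k (fun z : E m => z i) y = if k = i then 1 else 0 := by
  unfold pd
  rw [(hasFDerivAt_coord i y).fderiv]
  simp [EuclideanSpace.proj, EuclideanSpace.single_apply, eq_comm]

-- radial
lemma hasFDerivAt_radial {W : ℝ → ℝ} {w' : ℝ} {y : E m} (hy : y ≠ 0)
    (hW : HasDerivAt W w' ‖y‖) :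
    HasFDerivAt (fun z : E m => W ‖z‖) ((w' * (2 * ‖y‖)⁻¹) • (2 • (innerSL ℝ y))) y := by
  have hny : ‖y‖ ≠ 0 := norm_ne_zero_iff.mpr hy
  have h1 : HasFDerivAt (fun z : E m => ‖z‖ ^ 2) (2 • (innerSL ℝ y)) y :=
    (hasStrictFDerivAt_norm_sq y).hasFDerivAt
  have h2 : HasDerivAt Real.sqrt ((2 * ‖y‖)⁻¹) (‖y‖ ^ 2) := by
    have := Real.hasDerivAt_sqrt (x := ‖y‖ ^ 2) (by positivity)
    simpa [Real.sqrt_sq (norm_nonneg y)] using this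
  have h3 : HasDerivAt W (w' ) (Real.sqrt (‖y‖ ^ 2)) := by
    rwa [Real.sqrt_sq (norm_nonneg y)]
  have h4 := (h3.comp _ h2).comp_hasFDerivAt y h1
  have h5 : HasFDerivAt (fun z : E m => W (Real.sqrt (‖z‖ ^ 2)))
      ((w' * (2 * ‖y‖)⁻¹) • (2 • (innerSL ℝ y))) y := h4
  have : (fun z : E m => W (Real.sqrt (‖z‖ ^ 2))) = fun z : E m => W ‖z‖ := by
    funext z; rw [Real.sqrt_sq (norm_nonneg z)]
  rwa [this] at h5

lemma diff_radial {W : ℝ → ℝ} {w' : ℝ} {y : E m} (hy : y ≠ 0)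
    (hW : HasDerivAt W w' ‖y‖) : DifferentiableAt ℝ (fun z : E m => W ‖z‖) y :=
  (hasFDerivAt_radial hy hW).differentiableAt

lemma pd_radial {W : ℝ → ℝ} {w' : ℝ} {y : E m} (hy : y ≠ 0)
    (hW : HasDerivAt W w' ‖y‖) (k : Fin m) :
    pd k (fun z : E m => W ‖z‖) y = w' * (y k / ‖y‖) := by
  have hny : ‖y‖ ≠ 0 := norm_ne_zero_iff.mpr hy
  unfold pd
  rw [(hasFDerivAt_radial hy hW).fderiv]
  simp [real_inner_comm, EuclideanSpace.inner_single_left]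
  field_simp
  simp [EuclideanSpace.inner_single_right]


lemma pd_mul {f g : E m → ℝ} {y : E m} (k : Fin m)
    (hf : DifferentiableAt ℝ f y) (hg : DifferentiableAt ℝ g y) :
    pd k (fun z => f z * g z) y = pd k f y * g y + f y * pd k g y := by
  unfold pd
  rw [fderiv_fun_mul hf hg]
  simp
  ring

lemma pd_add {f g : E m → ℝ} {y : E m} (k : Fin m)
    (hf : DifferentiableAt ℝ f y) (hg : DifferentiableAt ℝ g y) :
    pd k (fun z => f z + g z) y = pd k f y + pd k g y := by
  unfold pd
  rw [fderiv_fun_add hf hg]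
  simp

lemma pd_const_mul {f : E m → ℝ} {y : E m} (k : Fin m) (c : ℝ)
    (hf : DifferentiableAt ℝ f y) :
    pd k (fun z => c * f z) y = c * pd k f y := by
  unfold pd
  rw [fderiv_const_mul hf]
  simp

variable {W : ℝ → ℝ} {w' : ℝ} {y : E m}

lemma diff_rad1 (hy : y ≠ 0) (hW : HasDerivAt W w' ‖y‖) (a : Fin m) :
    DifferentiableAt ℝ (fun z : E m => W ‖z‖ * z a) y :=
  (diff_radial hy hW).mul (diff_coord a y)

lemma diff_rad2 (hy : y ≠ 0) (hW : HasDerivAt W w' ‖y‖) (a b : Fin m) :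
    DifferentiableAt ℝ (fun z : E m => W ‖z‖ * z a * z b) y :=
  (diff_rad1 hy hW a).mul (diff_coord b y)

lemma diff_rad3 (hy : y ≠ 0) (hW : HasDerivAt W w' ‖y‖) (a b c : Fin m) :
    DifferentiableAt ℝ (fun z : E m => W ‖z‖ * z a * z b * z c) y :=
  (diff_rad2 hy hW a b).mul (diff_coord c y)

lemma pd_rad1 (hy : y ≠ 0) (hW : HasDerivAt W w' ‖y‖) (k a : Fin m) :
    pd k (fun z : E m => W ‖z‖ * z a) y
      = w' * (y k / ‖y‖) * y a + W ‖y‖ * (if k = a then 1 else 0) := by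
  rw [pd_mul k (diff_radial hy hW) (diff_coord a y), pd_radial hy hW k, pd_coord k a y]

lemma pd_rad2 (hy : y ≠ 0) (hW : HasDerivAt W w' ‖y‖) (k a b : Fin m) :
    pd k (fun z : E m => W ‖z‖ * z a * z b) y
      = w' * (y k / ‖y‖) * y a * y b
        + W ‖y‖ * ((if k = a then 1 else 0) * y b + (if k = b then 1 else 0) * y a) := by
  rw [pd_mul k (diff_rad1 hy hW a) (diff_coord b y), pd_rad1 hy hW k a, pd_coord k b y]
  ring

lemma pd_rad3 (hy : y ≠ 0) (hW : HasDerivAt W w' ‖y‖) (k a b c : Fin m) :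
    pd k (fun z : E m => W ‖z‖ * z a * z b * z c) y
      = w' * (y k / ‖y‖) * y a * y b * y c
        + W ‖y‖ * ((if k = a then 1 else 0) * y b * y c
            + (if k = b then 1 else 0) * y a * y c
            + (if k = c then 1 else 0) * y a * y b) := by
  rw [pd_mul k (diff_rad2 hy hW a b) (diff_coord c y), pd_rad2 hy hW k a b, pd_coord k c y]
  ring

section Scalar
variable (α s : ℝ) (V : ℝ → ℝ)

def Sf : ℝ → ℝ := fun t => Real.sin (α + s * V t)
def Cf : ℝ → ℝ := fun t => Real.cos (α + s * V t)
def dS : ℝ → ℝ := fun t => s * deriv V t * Cf α s V t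
def dC : ℝ → ℝ := fun t => -(s * deriv V t * Sf α s V t)
def ddS : ℝ → ℝ := fun t => s * deriv (deriv V) t * Cf α s V t + s * deriv V t * dC α s V t
def ddC : ℝ → ℝ := fun t => -(s * deriv (deriv V) t * Sf α s V t + s * deriv V t * dS α s V t)
def F1 : ℝ → ℝ := fun t => dS α s V t / t
def F3 : ℝ → ℝ := fun t => Sf α s V t / t ^ 2
def F5 : ℝ → ℝ := fun t => dS α s V t / t ^ 3 - 2 * Sf α s V t / t ^ 4
def G1 : ℝ → ℝ := fun t => dC α s V t / t
def F1d : ℝ → ℝ := fun t => ddS α s V t / t - dS α s V t / t ^ 2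
def F3d : ℝ → ℝ := fun t => dS α s V t / t ^ 2 - 2 * Sf α s V t / t ^ 3
def F5d : ℝ → ℝ := fun t =>
  ddS α s V t / t ^ 3 - 5 * dS α s V t / t ^ 4 + 8 * Sf α s V t / t ^ 5
def G1d : ℝ → ℝ := fun t => ddC α s V t / t - dC α s V t / t ^ 2

variable {V}
variable (hV : ContDiffOn ℝ (⊤ : ℕ∞) V (Set.Ioi 0)) {t : ℝ} (ht : 0 < t)
include hV ht

lemma hasDerivAt_V : HasDerivAt V (deriv V t) t :=
  (((hV.differentiableOn (by simp)) t ht).differentiableAt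
    (isOpen_Ioi.mem_nhds ht)).hasDerivAt

lemma hasDerivAt_dV : HasDerivAt (deriv V) (deriv (deriv V) t) t := by
  have h2 : ContDiffOn ℝ (⊤ : ℕ∞) (deriv V) (Set.Ioi 0) :=
    hV.deriv_of_isOpen isOpen_Ioi (by simp)
  exact (((h2.differentiableOn (by simp)) t ht).differentiableAt
    (isOpen_Ioi.mem_nhds ht)).hasDerivAt

lemma hasDerivAt_Sf : HasDerivAt (Sf α s V) (dS α s V t) t := by
  have h := (((hasDerivAt_V hV ht).const_mul s).const_add α).sin
  unfold Sf
  simpa [Sf, dS, Cf, mul_comm] using h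

lemma hasDerivAt_Cf : HasDerivAt (Cf α s V) (dC α s V t) t := by
  have h := (((hasDerivAt_V hV ht).const_mul s).const_add α).cos
  unfold Cf
  simpa [Cf, dC, Sf, mul_comm] using h

lemma hasDerivAt_dS : HasDerivAt (dS α s V) (ddS α s V t) t := by
  have h := (((hasDerivAt_dV hV ht).const_mul s).mul (hasDerivAt_Cf α s hV ht))
  exact h.congr_deriv (by unfold ddS; ring)

lemma hasDerivAt_dC : HasDerivAt (dC α s V) (ddC α s V t) t := by
  have h := (((hasDerivAt_dV hV ht).const_mul s).mul (hasDerivAt_Sf α s hV ht)).neg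
  exact h.congr_deriv (by unfold ddC; ring)

lemma hasDerivAt_F1 : HasDerivAt (F1 α s V) (F1d α s V t) t := by
  have h := (hasDerivAt_dS α s hV ht).div (hasDerivAt_id t) ht.ne'
  refine h.congr_deriv ?_
  unfold F1d
  simp only [id_eq]
  field_simp

lemma hasDerivAt_F3 : HasDerivAt (F3 α s V) (F3d α s V t) t := by
  have h := (hasDerivAt_Sf α s hV ht).div
    ((hasDerivAt_pow 2 t)) (by positivity)
  refine h.congr_deriv ?_
  unfold F3d
  field_simp
  ring

lemma hasDerivAt_F5 : HasDerivAt (F5 α s V) (F5d α s V t) t := by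
  have h1 := (hasDerivAt_dS α s hV ht).div (hasDerivAt_pow 3 t) (by positivity)
  have h2 := (((hasDerivAt_Sf α s hV ht).const_mul 2).div (hasDerivAt_pow 4 t)
    (by positivity))
  refine (h1.sub h2).congr_deriv ?_
  unfold F5d
  field_simp
  ring

lemma hasDerivAt_G1 : HasDerivAt (G1 α s V) (G1d α s V t) t := by
  have h := (hasDerivAt_dC α s hV ht).div (hasDerivAt_id t) ht.ne'
  refine h.congr_deriv ?_
  unfold G1d
  simp only [id_eq]
  field_simp
end Scalar

variable {m : ℕ}

example (i : Fin m) (g : Fin m → ℝ) :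
    ∑ k : Fin m, (if k = i then (1:ℝ) else 0) * g k = g i := by
  simp [ite_mul]

lemma sum_quad (P Q R T U : ℝ) (i j : Fin m) (v : Fin m → ℝ) :
    ∑ k : Fin m, (P * v k ^ 2 + Q + R * ((if k = i then (1:ℝ) else 0) * v k)
      + T * ((if k = j then (1:ℝ) else 0) * v k)
      + U * ((if k = i then (1:ℝ) else 0) * (if k = j then (1:ℝ) else 0)))
    = P * (∑ k : Fin m, v k ^ 2) + m * Q + R * v i + T * v j
      + U * (if i = j then (1:ℝ) else 0) := by
  simp [Finset.sum_add_distrib, Finset.mul_sum, ite_mul, mul_ite, Finset.sum_ite_eq,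
    Finset.sum_ite_eq', mul_comm, eq_comm]

lemma sum_sq_lin (A B C : ℝ) (i j : Fin m) (v : Fin m → ℝ) :
    ∑ k : Fin m, (A * v k + B * (if k = i then (1:ℝ) else 0)
        + C * (if k = j then (1:ℝ) else 0)) ^ 2
    = A ^ 2 * (∑ k : Fin m, v k ^ 2) + 2 * A * B * v i + 2 * A * C * v j
      + B ^ 2 + C ^ 2 + 2 * B * C * (if i = j then (1:ℝ) else 0) := by
  have h : ∀ k : Fin m, (A * v k + B * (if k = i then (1:ℝ) else 0)
      + C * (if k = j then (1:ℝ) else 0)) ^ 2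
      = A ^ 2 * v k ^ 2 + (2*A*B) * ((if k = i then (1:ℝ) else 0) * v k)
        + (2*A*C) * ((if k = j then (1:ℝ) else 0) * v k)
        + B ^ 2 * ((if k = i then (1:ℝ) else 0) * (if k = i then (1:ℝ) else 0))
        + C ^ 2 * ((if k = j then (1:ℝ) else 0) * (if k = j then (1:ℝ) else 0))
        + (2*B*C) * ((if k = i then (1:ℝ) else 0) * (if k = j then (1:ℝ) else 0)) :=
    fun k => by ring
  rw [Finset.sum_congr rfl (fun k _ => h k)]
  simp [Finset.sum_add_distrib, Finset.mul_sum, ite_mul, mul_ite, Finset.sum_ite_eq,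
    Finset.sum_ite_eq', mul_comm, eq_comm]

lemma sum_sq_ij (aδ ax : ℝ) (v : Fin m → ℝ) :
    ∑ i : Fin m, ∑ j : Fin m,
      (aδ * (if i = j then (1:ℝ) else 0) + ax * (v i * v j)) ^ 2
    = aδ ^ 2 * m + 2 * aδ * ax * (∑ k : Fin m, v k ^ 2)
      + ax ^ 2 * (∑ k : Fin m, v k ^ 2) ^ 2 := by
  have h : ∀ i j : Fin m, (aδ * (if i = j then (1:ℝ) else 0) + ax * (v i * v j)) ^ 2
      = aδ ^ 2 * ((if i = j then (1:ℝ) else 0) * (if i = j then (1:ℝ) else 0))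
        + (2 * aδ * ax) * ((if i = j then (1:ℝ) else 0) * (v i * v j))
        + ax ^ 2 * (v i ^ 2 * v j ^ 2) := fun i j => by ring
  rw [Finset.sum_congr rfl (fun i _ => Finset.sum_congr rfl (fun j _ => h i j))]
  simp [Finset.sum_add_distrib, Finset.mul_sum, ite_mul, mul_ite, Finset.sum_ite_eq,
    Finset.sum_ite_eq', sq, Finset.sum_mul, Finset.mul_sum, mul_comm, mul_left_comm]


lemma sum_ij_poly (A B C D Ee : ℝ) (v : Fin m → ℝ) :
    ∑ i : Fin m, ∑ j : Fin m,
      (A * (if i = j then (1:ℝ) else 0)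
        + B * ((if i = j then (1:ℝ) else 0) * (v i * v j))
        + C * (v i ^ 2 * v j ^ 2) + D * v i ^ 2 + Ee * v j ^ 2)
    = m * A + B * (∑ k : Fin m, v k ^ 2) + C * (∑ k : Fin m, v k ^ 2) ^ 2
      + m * D * (∑ k : Fin m, v k ^ 2) + m * Ee * (∑ k : Fin m, v k ^ 2) := by
  simp [Finset.sum_add_distrib, Finset.mul_sum, ite_mul, mul_ite, Finset.sum_ite_eq,
    Finset.sum_ite_eq', sq, Finset.sum_mul, mul_comm, mul_left_comm]
  ring_nf

lemma pd_congr_ne {m : ℕ} {f g : E m → ℝ} {x : E m} (hx : x ≠ 0)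
    (hfg : ∀ y : E m, y ≠ 0 → f y = g y) (k : Fin m) : pd k f x = pd k g x := by
  unfold pd
  have hev : f =ᶠ[nhds x] g :=
    Filter.eventually_of_mem (isOpen_compl_singleton.mem_nhds hx)
      (fun y hy => hfg y hy)
  rw [hev.fderiv_eq]

lemma sum_coord_sq' {m : ℕ} (x : E m) : ∑ k : Fin m, x k ^ 2 = ‖x‖ ^ 2 := by
  rw [EuclideanSpace.norm_eq, Real.sq_sqrt (by positivity)]
  simp [sq_abs]

def cst (m : ℕ) : ℝ := 1 / Real.sqrt ((m : ℝ) * ((m : ℝ) - 1))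

section Comp
variable (m : ℕ) (α s : ℝ) (V : ℝ → ℝ) (i j : Fin m)

def Gfun (m : ℕ) (α s : ℝ) (V : ℝ → ℝ) (i j k : Fin m) : E m → ℝ := fun y =>
  cst m * -(if i = j then (1:ℝ) else 0) * (F1 α s V ‖y‖ * y k)
    + cst m * (m : ℝ) * (F5 α s V ‖y‖ * y i * y j * y k)
    + cst m * (m : ℝ) * (if k = i then (1:ℝ) else 0) * (F3 α s V ‖y‖ * y j)
    + cst m * (m : ℝ) * (if k = j then (1:ℝ) else 0) * (F3 α s V ‖y‖ * y i)

lemma comp_inl_eq {y : E m} (hy : y ≠ 0) :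
    uTildeVar m α s V (Sum.inl (i, j)) y
      = cst m * -(if i = j then (1:ℝ) else 0) * Sf α s V ‖y‖
        + cst m * (m : ℝ) * (F3 α s V ‖y‖ * y i * y j) := by
  have hr : ‖y‖ ≠ 0 := norm_ne_zero_iff.mpr hy
  simp only [uTildeVar, uMN, Sf, F3]
  rw [show (1 / Real.sqrt ((m:ℝ) * ((m:ℝ) - 1))) = cst m from rfl]
  set c := cst m with hc
  set d0 := (if i = j then (1:ℝ) else 0) with hd0
  field_simp

lemma comp_inr_eq (y : E m) :
    uTildeVar m α s V (Sum.inr ()) y = Cf α s V ‖y‖ := rfl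

variable {V}
variable (hV : ContDiffOn ℝ (⊤ : ℕ∞) V (Set.Ioi 0))
include hV

lemma pd_comp_inl {y : E m} (hy : y ≠ 0) (k : Fin m) :
    pd k (uTildeVar m α s V (Sum.inl (i, j))) y = Gfun m α s V i j k y := by
  have hr : (0:ℝ) < ‖y‖ := norm_pos_iff.mpr hy
  rw [pd_congr_ne hy (fun z hz => comp_inl_eq m α s V i j hz) k]
  show _ = cst m * -(if i = j then (1:ℝ) else 0) * (F1 α s V ‖y‖ * y k)
        + cst m * (m : ℝ) * (F5 α s V ‖y‖ * y i * y j * y k)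
        + cst m * (m : ℝ) * (if k = i then (1:ℝ) else 0) * (F3 α s V ‖y‖ * y j)
        + cst m * (m : ℝ) * (if k = j then (1:ℝ) else 0) * (F3 α s V ‖y‖ * y i)
  have hS := hasDerivAt_Sf α s hV hr
  have hF3 := hasDerivAt_F3 α s hV hr
  rw [pd_add k ((diff_radial hy hS).const_mul _) ((diff_rad2 hy hF3 i j).const_mul _),
    pd_const_mul k _ (diff_radial hy hS), pd_const_mul k _ (diff_rad2 hy hF3 i j),
    pd_radial hy hS k, pd_rad2 hy hF3 k i j]
  simp only [F1, F5, F3d]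
  set d0 := (if i = j then (1:ℝ) else 0) with hd0
  set d1 := (if k = i then (1:ℝ) else 0) with hd1
  set d2 := (if k = j then (1:ℝ) else 0) with hd2
  field_simp
  ring

lemma pd_comp_inr {y : E m} (hy : y ≠ 0) (k : Fin m) :
    pd k (uTildeVar m α s V (Sum.inr ())) y = G1 α s V ‖y‖ * y k := by
  have hr : (0:ℝ) < ‖y‖ := norm_pos_iff.mpr hy
  rw [pd_congr_ne hy (fun z _ => comp_inr_eq m α s V z) k]
  rw [pd_radial hy (hasDerivAt_Cf α s hV hr) k]
  simp only [G1]
  field_simp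


lemma pd_pd_inl {x : E m} (hx : x ≠ 0) (k : Fin m) :
    pd k (pd k (uTildeVar m α s V (Sum.inl (i, j)))) x
      = (cst m * -(if i = j then (1:ℝ) else 0) * F1d α s V ‖x‖ / ‖x‖
          + cst m * (m : ℝ) * F5d α s V ‖x‖ / ‖x‖ * (x i * x j)) * x k ^ 2
        + (cst m * -(if i = j then (1:ℝ) else 0) * F1 α s V ‖x‖
          + cst m * (m : ℝ) * F5 α s V ‖x‖ * (x i * x j))
        + (cst m * (m : ℝ) * (F5 α s V ‖x‖ * x j + F3d α s V ‖x‖ * x j / ‖x‖))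
            * ((if k = i then (1:ℝ) else 0) * x k)
        + (cst m * (m : ℝ) * (F5 α s V ‖x‖ * x i + F3d α s V ‖x‖ * x i / ‖x‖))
            * ((if k = j then (1:ℝ) else 0) * x k)
        + (2 * cst m * (m : ℝ) * F3 α s V ‖x‖)
            * ((if k = i then (1:ℝ) else 0) * (if k = j then (1:ℝ) else 0)) := by
  have hr : (0:ℝ) < ‖x‖ := norm_pos_iff.mpr hx
  rw [pd_congr_ne hx (fun z hz => pd_comp_inl m α s i j hV hz k) k]
  have hF1 := hasDerivAt_F1 α s hV hr
  have hF5 := hasDerivAt_F5 α s hV hr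
  have hF3 := hasDerivAt_F3 α s hV hr
  have d1 : DifferentiableAt ℝ
      (fun y : E m => cst m * -(if i = j then (1:ℝ) else 0) * (F1 α s V ‖y‖ * y k)) x :=
    (diff_rad1 hx hF1 k).const_mul _
  have d2 : DifferentiableAt ℝ
      (fun y : E m => cst m * (m : ℝ) * (F5 α s V ‖y‖ * y i * y j * y k)) x :=
    (diff_rad3 hx hF5 i j k).const_mul _
  have d3 : DifferentiableAt ℝ
      (fun y : E m => cst m * (m : ℝ) * (if k = i then (1:ℝ) else 0)
        * (F3 α s V ‖y‖ * y j)) x :=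
    (diff_rad1 hx hF3 j).const_mul _
  have d4 : DifferentiableAt ℝ
      (fun y : E m => cst m * (m : ℝ) * (if k = j then (1:ℝ) else 0)
        * (F3 α s V ‖y‖ * y i)) x :=
    (diff_rad1 hx hF3 i).const_mul _
  have hG : pd k (Gfun m α s V i j k) x
      = pd k (fun y : E m =>
          cst m * -(if i = j then (1:ℝ) else 0) * (F1 α s V ‖y‖ * y k)
          + cst m * (m : ℝ) * (F5 α s V ‖y‖ * y i * y j * y k)
          + cst m * (m : ℝ) * (if k = i then (1:ℝ) else 0) * (F3 α s V ‖y‖ * y j)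
          + cst m * (m : ℝ) * (if k = j then (1:ℝ) else 0) * (F3 α s V ‖y‖ * y i)) x := rfl
  rw [hG, pd_add k ((d1.fun_add d2).fun_add d3) d4, pd_add k (d1.fun_add d2) d3, pd_add k d1 d2,
    pd_const_mul k _ (diff_rad1 hx hF1 k), pd_const_mul k _ (diff_rad3 hx hF5 i j k),
    pd_const_mul k _ (diff_rad1 hx hF3 j), pd_const_mul k _ (diff_rad1 hx hF3 i),
    pd_rad1 hx hF1 k k, pd_rad3 hx hF5 k i j k, pd_rad1 hx hF3 k j, pd_rad1 hx hF3 k i]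
  simp only [if_pos rfl]
  set d0 := (if i = j then (1:ℝ) else 0) with hd0
  set da := (if k = i then (1:ℝ) else 0) with hda
  set db := (if k = j then (1:ℝ) else 0) with hdb
  field_simp
  rw [if_pos trivial]
  ring

lemma lap_inl {x : E m} (hx : x ≠ 0) :
    lap (uTildeVar m α s V (Sum.inl (i, j))) x
      = (-(cst m) * (‖x‖ * F1d α s V ‖x‖ + (m : ℝ) * F1 α s V ‖x‖)
          + 2 * cst m * (m : ℝ) * F3 α s V ‖x‖) * (if i = j then (1:ℝ) else 0)
        + (cst m * (m : ℝ) * (‖x‖ * F5d α s V ‖x‖ + ((m : ℝ) + 2) * F5 α s V ‖x‖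
            + 2 * F3d α s V ‖x‖ / ‖x‖)) * (x i * x j) := by
  have hr : (0:ℝ) < ‖x‖ := norm_pos_iff.mpr hx
  unfold lap
  rw [Finset.sum_congr rfl (fun k _ => pd_pd_inl m α s i j hV hx k), sum_quad,
    sum_coord_sq']
  set d0 := (if i = j then (1:ℝ) else 0) with hd0
  field_simp
  ring

lemma pd_pd_inr {x : E m} (hx : x ≠ 0) (k : Fin m) :
    pd k (pd k (uTildeVar m α s V (Sum.inr ()))) x
      = G1d α s V ‖x‖ / ‖x‖ * x k ^ 2 + G1 α s V ‖x‖ := by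
  have hr : (0:ℝ) < ‖x‖ := norm_pos_iff.mpr hx
  rw [pd_congr_ne hx (fun z hz => pd_comp_inr m α s hV hz k) k]
  have hG1 := hasDerivAt_G1 α s hV hr
  have hGf : pd k (fun y : E m => G1 α s V ‖y‖ * y k) x
      = G1d α s V ‖x‖ * (x k / ‖x‖) * x k + G1 α s V ‖x‖ * (if k = k then (1:ℝ) else 0) :=
    pd_rad1 hx hG1 k k
  rw [hGf]
  simp only [if_pos rfl]
  field_simp
  rw [if_pos trivial]
  ring

lemma lap_inr {x : E m} (hx : x ≠ 0) :
    lap (uTildeVar m α s V (Sum.inr ())) x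
      = ‖x‖ * G1d α s V ‖x‖ + (m : ℝ) * G1 α s V ‖x‖ := by
  have hr : (0:ℝ) < ‖x‖ := norm_pos_iff.mpr hx
  unfold lap
  rw [Finset.sum_congr rfl (fun k _ => pd_pd_inr m α s hV hx k),
    Finset.sum_add_distrib, ← Finset.mul_sum, sum_coord_sq', Finset.sum_const]
  simp
  field_simp

end Comp

lemma cst_sq {m : ℕ} (hm : 2 ≤ m) : cst m ^ 2 * ((m : ℝ) * ((m : ℝ) - 1)) = 1 := by
  have h2 : (2:ℝ) ≤ (m:ℝ) := by exact_mod_cast hm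
  have ha : (0:ℝ) < (m:ℝ) * ((m:ℝ) - 1) := by nlinarith
  unfold cst
  rw [div_pow, one_pow, Real.sq_sqrt ha.le]
  field_simp
  exact div_self (by linarith)

lemma cst_sq' {m : ℕ} (hm : 2 ≤ m) : cst m ^ 2 = ((m : ℝ) * ((m : ℝ) - 1))⁻¹ := by
  have h2 : (2:ℝ) ≤ (m:ℝ) := by exact_mod_cast hm
  have ha : (0:ℝ) < (m:ℝ) * ((m:ℝ) - 1) := by nlinarith
  unfold cst
  rw [div_pow, one_pow, Real.sq_sqrt ha.le, one_div]

lemma sum_u_sq {m : ℕ} (hm : 2 ≤ m) (x : E m) (hx : x ≠ 0) :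
    ∑ i : Fin m, ∑ j : Fin m, (uMN m i j x) ^ 2 = 1 := by
  have hr : (0:ℝ) < ‖x‖ := norm_pos_iff.mpr hx
  have hpt : ∀ i j : Fin m, (uMN m i j x) ^ 2
      = ((-(cst m)) * (if i = j then (1:ℝ) else 0)
          + (cst m * (m:ℝ) / ‖x‖ ^ 2) * (x i * x j)) ^ 2 := by
    intro i j
    unfold uMN
    rw [show (1 / Real.sqrt ((m:ℝ) * ((m:ℝ) - 1))) = cst m from rfl]
    ring
  rw [Finset.sum_congr rfl (fun i _ => Finset.sum_congr rfl (fun j _ => hpt i j)),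
    sum_sq_ij, sum_coord_sq']
  have hc := cst_sq hm
  have hrne : ‖x‖ ≠ 0 := hr.ne'
  field_simp
  linear_combination hc

section Final
variable (m : ℕ) (α s : ℝ) {V : ℝ → ℝ} (i j : Fin m)
variable (hV : ContDiffOn ℝ (⊤ : ℕ∞) V (Set.Ioi 0))
include hV

lemma lap_inl' {x : E m} (hx : x ≠ 0) :
    lap (uTildeVar m α s V (Sum.inl (i, j))) x
      = (Cf α s V ‖x‖ * (s * (deriv (deriv V) ‖x‖ + ((m:ℝ) - 1) * deriv V ‖x‖ / ‖x‖))
          - Sf α s V ‖x‖ * (s ^ 2 * (deriv V ‖x‖) ^ 2 + 2 * (m:ℝ) / ‖x‖ ^ 2))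
        * uMN m i j x := by
  have hr : (0:ℝ) < ‖x‖ := norm_pos_iff.mpr hx
  have hrne : ‖x‖ ≠ 0 := hr.ne'
  rw [lap_inl m α s i j hV hx]
  unfold uMN
  rw [show (1 / Real.sqrt ((m:ℝ) * ((m:ℝ) - 1))) = cst m from rfl]
  simp only [F1d, F1, F3, F5, F5d, F3d, ddS, dS, dC, Sf, Cf]
  set d0 := (if i = j then (1:ℝ) else 0) with hd0
  field_simp
  ring

lemma lap_inr' {x : E m} (hx : x ≠ 0) :
    lap (uTildeVar m α s V (Sum.inr ())) x
      = -(Sf α s V ‖x‖ * (s * (deriv (deriv V) ‖x‖ + ((m:ℝ) - 1) * deriv V ‖x‖ / ‖x‖))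
          + Cf α s V ‖x‖ * (s ^ 2 * (deriv V ‖x‖) ^ 2)) := by
  have hr : (0:ℝ) < ‖x‖ := norm_pos_iff.mpr hx
  have hrne : ‖x‖ ≠ 0 := hr.ne'
  rw [lap_inr m α s hV hx]
  simp only [G1d, G1, ddC, dS, dC, Sf, Cf]
  field_simp
  ring

lemma sumk_inl {x : E m} (hx : x ≠ 0) :
    ∑ k : Fin m, (pd k (uTildeVar m α s V (Sum.inl (i, j))) x) ^ 2
      = (cst m * -(if i = j then (1:ℝ) else 0) * F1 α s V ‖x‖
          + cst m * (m:ℝ) * (F5 α s V ‖x‖ * x i * x j)) ^ 2 * ‖x‖ ^ 2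
        + 2 * (cst m * -(if i = j then (1:ℝ) else 0) * F1 α s V ‖x‖
          + cst m * (m:ℝ) * (F5 α s V ‖x‖ * x i * x j))
            * (cst m * (m:ℝ) * (F3 α s V ‖x‖ * x j)) * x i
        + 2 * (cst m * -(if i = j then (1:ℝ) else 0) * F1 α s V ‖x‖
          + cst m * (m:ℝ) * (F5 α s V ‖x‖ * x i * x j))
            * (cst m * (m:ℝ) * (F3 α s V ‖x‖ * x i)) * x j
        + (cst m * (m:ℝ) * (F3 α s V ‖x‖ * x j)) ^ 2
        + (cst m * (m:ℝ) * (F3 α s V ‖x‖ * x i)) ^ 2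
        + 2 * (cst m * (m:ℝ) * (F3 α s V ‖x‖ * x j))
            * (cst m * (m:ℝ) * (F3 α s V ‖x‖ * x i)) * (if i = j then (1:ℝ) else 0) := by
  have hpt : ∀ k ∈ Finset.univ, (pd k (uTildeVar m α s V (Sum.inl (i, j))) x) ^ 2
      = ((cst m * -(if i = j then (1:ℝ) else 0) * F1 α s V ‖x‖
            + cst m * (m:ℝ) * (F5 α s V ‖x‖ * x i * x j)) * x k
          + (cst m * (m:ℝ) * (F3 α s V ‖x‖ * x j)) * (if k = i then (1:ℝ) else 0)
          + (cst m * (m:ℝ) * (F3 α s V ‖x‖ * x i)) * (if k = j then (1:ℝ) else 0)) ^ 2 := by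
    intro k _
    rw [pd_comp_inl m α s i j hV hx k]
    show (cst m * -(if i = j then (1:ℝ) else 0) * (F1 α s V ‖x‖ * x k)
        + cst m * (m : ℝ) * (F5 α s V ‖x‖ * x i * x j * x k)
        + cst m * (m : ℝ) * (if k = i then (1:ℝ) else 0) * (F3 α s V ‖x‖ * x j)
        + cst m * (m : ℝ) * (if k = j then (1:ℝ) else 0) * (F3 α s V ‖x‖ * x i)) ^ 2 = _
    ring
  rw [Finset.sum_congr rfl hpt, sum_sq_lin, sum_coord_sq']

lemma grad_inl (hm : 2 ≤ m) {x : E m} (hx : x ≠ 0) :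
    ∑ i : Fin m, ∑ j : Fin m,
        ∑ k : Fin m, (pd k (uTildeVar m α s V (Sum.inl (i, j))) x) ^ 2
      = dS α s V ‖x‖ ^ 2 + Sf α s V ‖x‖ ^ 2 * (2 * (m:ℝ) / ‖x‖ ^ 2) := by
  have hr : (0:ℝ) < ‖x‖ := norm_pos_iff.mpr hx
  have hrne : ‖x‖ ≠ 0 := hr.ne'
  have hpt : ∀ i' j' : Fin m,
      (∑ k : Fin m, (pd k (uTildeVar m α s V (Sum.inl (i', j'))) x) ^ 2)
      = (cst m ^ 2 * F1 α s V ‖x‖ ^ 2 * ‖x‖ ^ 2) * (if i' = j' then (1:ℝ) else 0)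
        + (-2 * cst m ^ 2 * (m:ℝ) * F1 α s V ‖x‖ * F5 α s V ‖x‖ * ‖x‖ ^ 2
            - 4 * cst m ^ 2 * (m:ℝ) * F1 α s V ‖x‖ * F3 α s V ‖x‖
            + 2 * cst m ^ 2 * (m:ℝ) ^ 2 * F3 α s V ‖x‖ ^ 2)
              * ((if i' = j' then (1:ℝ) else 0) * (x i' * x j'))
        + (cst m ^ 2 * (m:ℝ) ^ 2 * F5 α s V ‖x‖ ^ 2 * ‖x‖ ^ 2
            + 4 * cst m ^ 2 * (m:ℝ) ^ 2 * F5 α s V ‖x‖ * F3 α s V ‖x‖)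
              * (x i' ^ 2 * x j' ^ 2)
        + (cst m ^ 2 * (m:ℝ) ^ 2 * F3 α s V ‖x‖ ^ 2) * x i' ^ 2
        + (cst m ^ 2 * (m:ℝ) ^ 2 * F3 α s V ‖x‖ ^ 2) * x j' ^ 2 := by
    intro i' j'
    rw [sumk_inl m α s i' j' hV hx]
    by_cases h : i' = j' <;> simp [h] <;> ring
  rw [Finset.sum_congr rfl (fun i' _ => Finset.sum_congr rfl (fun j' _ => hpt i' j')),
    sum_ij_poly, sum_coord_sq']
  have h2 : (2:ℝ) ≤ (m:ℝ) := by exact_mod_cast hm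
  have hm0 : (m:ℝ) ≠ 0 := by nlinarith
  have hm1 : (m:ℝ) - 1 ≠ 0 := by nlinarith
  simp only [cst_sq' hm, F1, F3, F5]
  field_simp
  ring

lemma grad_inr {x : E m} (hx : x ≠ 0) :
    ∑ k : Fin m, (pd k (uTildeVar m α s V (Sum.inr ())) x) ^ 2
      = dC α s V ‖x‖ ^ 2 := by
  have hrne : ‖x‖ ≠ 0 := norm_ne_zero_iff.mpr hx
  have hpt : ∀ k ∈ Finset.univ, (pd k (uTildeVar m α s V (Sum.inr ())) x) ^ 2
      = G1 α s V ‖x‖ ^ 2 * x k ^ 2 := fun k _ => by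
    rw [pd_comp_inr m α s hV hx k]; ring
  rw [Finset.sum_congr rfl hpt, ← Finset.mul_sum, sum_coord_sq']
  simp only [G1]
  field_simp

end Final


theorem stmt8 (m : ℕ) (hm : 2 ≤ m) (α s : ℝ) (V : ℝ → ℝ)
    (hV : ContDiffOn ℝ (⊤ : ℕ∞) V (Set.Ioi 0))
    (x : EuclideanSpace ℝ (Fin m)) (hx : x ≠ 0) :
    (∑ a : (Fin m × Fin m) ⊕ Unit, (lap (uTildeVar m α s V a) x) ^ 2)
        - (gradSq (uTildeVar m α s V) x) ^ 2
      = (s * (deriv (deriv V) ‖x‖ + ((m : ℝ) - 1) * deriv V ‖x‖ / ‖x‖)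
          - Real.sin (2 * α + 2 * s * V ‖x‖) * (m : ℝ) / ‖x‖ ^ 2) ^ 2 := by
  have hr : (0:ℝ) < ‖x‖ := norm_pos_iff.mpr hx
  have hrne : ‖x‖ ≠ 0 := hr.ne'
  have hU := sum_u_sq hm x hx
  have hsc : Real.sin (α + s * V ‖x‖) ^ 2 + Real.cos (α + s * V ‖x‖) ^ 2 = 1 :=
    Real.sin_sq_add_cos_sq _
  have hlap : (∑ a : (Fin m × Fin m) ⊕ Unit, (lap (uTildeVar m α s V a) x) ^ 2)
      = (Real.cos (α + s * V ‖x‖)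
            * (s * (deriv (deriv V) ‖x‖ + ((m:ℝ) - 1) * deriv V ‖x‖ / ‖x‖))
          - Real.sin (α + s * V ‖x‖)
            * (s ^ 2 * (deriv V ‖x‖) ^ 2 + 2 * (m:ℝ) / ‖x‖ ^ 2)) ^ 2
        + (Real.sin (α + s * V ‖x‖)
            * (s * (deriv (deriv V) ‖x‖ + ((m:ℝ) - 1) * deriv V ‖x‖ / ‖x‖))
          + Real.cos (α + s * V ‖x‖) * (s ^ 2 * (deriv V ‖x‖) ^ 2)) ^ 2 := by
    rw [Fintype.sum_sum_type, Fintype.sum_prod_type]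
    rw [Finset.sum_congr rfl (fun i _ => Finset.sum_congr rfl
      (fun j _ => by rw [lap_inl' m α s i j hV hx, mul_pow]))]
    simp only [← Finset.mul_sum]
    rw [hU, mul_one]
    have hUnit : ∑ b : Unit, (lap (uTildeVar m α s V (Sum.inr b)) x) ^ 2
        = (lap (uTildeVar m α s V (Sum.inr ())) x) ^ 2 := by simp
    rw [hUnit, lap_inr' m α s hV hx]
    simp only [Sf, Cf]
    ring
  have hgrad : gradSq (uTildeVar m α s V) x
      = s ^ 2 * (deriv V ‖x‖) ^ 2
        + Real.sin (α + s * V ‖x‖) ^ 2 * (2 * (m:ℝ) / ‖x‖ ^ 2) := by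
    unfold gradSq
    rw [Finset.sum_congr rfl (fun k (_ : k ∈ Finset.univ) =>
      (Fintype.sum_sum_type fun a => (pd k (uTildeVar m α s V a) x) ^ 2))]
    rw [Finset.sum_congr rfl (fun k (_ : k ∈ Finset.univ) => by
      rw [Fintype.sum_prod_type (f := fun p : Fin m × Fin m =>
        (pd k (uTildeVar m α s V (Sum.inl p)) x) ^ 2)])]
    rw [Finset.sum_add_distrib, Finset.sum_comm]
    rw [Finset.sum_congr rfl (fun i (_ : i ∈ Finset.univ) =>
      Finset.sum_comm)]
    have hUnit : ∀ k : Fin m, ∑ b : Unit, (pd k (uTildeVar m α s V (Sum.inr b)) x) ^ 2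
        = (pd k (uTildeVar m α s V (Sum.inr ())) x) ^ 2 := fun k => by simp
    rw [Finset.sum_congr rfl (fun k (_ : k ∈ Finset.univ) => hUnit k)]
    rw [grad_inl m α s hV hm hx, grad_inr m α s hV hx]
    simp only [dS, dC, Sf, Cf]
    linear_combination (s ^ 2 * (deriv V ‖x‖) ^ 2) * hsc
  rw [hlap, hgrad]
  rw [show 2 * α + 2 * s * V ‖x‖ = 2 * (α + s * V ‖x‖) by ring, Real.sin_two_mul]
  linear_combination ((s * (deriv (deriv V) ‖x‖ + ((m:ℝ) - 1) * deriv V ‖x‖ / ‖x‖)) ^ 2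
    + (s ^ 2 * (deriv V ‖x‖) ^ 2) ^ 2
    - Real.sin (α + s * V ‖x‖) ^ 2 * (2 * (m:ℝ) / ‖x‖ ^ 2) ^ 2) * hsc
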